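/- arXiv:0907.3975 — 5 statements merged into one kernel-verified Lean document; each statement's English description precedes it below -/
import Mathlib

section
/- For all (w₁,w₂,w₃) ∈ ℂ³, the following algebraic identity holds: (1−|w₁|²)²/2 + (1−|w₃|²)²/2 + |w₂|²(|w₁|² + |w₃|² + |w₂|²/4 − 1) − Re[w₂²·conj(w₁w₃)] = (1/4)(|w₁|² + |w₂|² + |w₃|² − 2)² + (1/4)(|w₁|² − |w₃|²)² + (1/2)|w₁w̄₂ − w₂w̄₃|². -/
/-- The effective potential `𝒫` of the SO(5) spherically symmetric EYM model. -/
noncomputable def Pot (w₁ w₂ w₃ : ℂ) : ℝ :=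
  (1 - Complex.normSq w₁) ^ 2 / 2 + (1 - Complex.normSq w₃) ^ 2 / 2
    + Complex.normSq w₂ *
        (Complex.normSq w₁ + Complex.normSq w₃ + Complex.normSq w₂ / 4 - 1)
    - (w₂ ^ 2 * (starRingEnd ℂ) (w₁ * w₃)).re

/-- The effective potential can be rewritten as a sum of three manifestly
nonnegative squares. -/
theorem pot_eq_sum_of_squares (w₁ w₂ w₃ : ℂ) :
    Pot w₁ w₂ w₃ =
      (1 / 4) * (Complex.normSq w₁ + Complex.normSq w₂ + Complex.normSq w₃ - 2) ^ 2
        + (1 / 4) * (Complex.normSq w₁ - Complex.normSq w₃) ^ 2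
        + (1 / 2) * Complex.normSq (w₁ * (starRingEnd ℂ) w₂ - w₂ * (starRingEnd ℂ) w₃) := by
  obtain ⟨a, b⟩ := w₁; obtain ⟨c, d⟩ := w₂; obtain ⟨e, f⟩ := w₃
  simp only [Pot, Complex.normSq_sub, Complex.normSq_mul, Complex.normSq_conj,
    Complex.normSq_mk, Complex.mul_re, Complex.mul_im, pow_two, Complex.conj_re, Complex.conj_im,
    Complex.sub_re, Complex.sub_im]
  ring
end

section
/- For all (w₁,w₂,w₃) ∈ ℂ³, 𝒫(w₁,w₂,w₃) ≥ 0. -/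
/-!
Writing `a, b, c` for `|w₁|², |w₂|², |w₃|²`, the potential is the sum of squares
`(1 - (a + b + c)/2)² + ((a - c)/2)²` plus `b (a + c)/2 - Re[w₂² conj(w₁w₃)]`,
and the last term is nonnegative because `|w₂² conj(w₁w₃)| = b |w₁| |w₃| ≤ b (a + c)/2`.
-/

open Complex

lemma re_sq_mul_conj_mul_le (x y z : ℂ) :
    (z ^ 2 * (starRingEnd ℂ) (x * y)).re ≤ normSq z * ((normSq x + normSq y) / 2) := by
  have amgm : ‖x‖ * ‖y‖ ≤ (normSq x + normSq y) / 2 := by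
    rw [← Complex.sq_norm, ← Complex.sq_norm]
    linarith [two_mul_le_add_sq ‖x‖ ‖y‖]
  calc (z ^ 2 * (starRingEnd ℂ) (x * y)).re
      ≤ ‖z ^ 2 * (starRingEnd ℂ) (x * y)‖ := re_le_norm _
    _ = normSq z * (‖x‖ * ‖y‖) := by
      rw [norm_mul, norm_conj, norm_mul, norm_pow, Complex.sq_norm]
    _ ≤ normSq z * ((normSq x + normSq y) / 2) :=
      mul_le_mul_of_nonneg_left amgm (normSq_nonneg z)

lemma pot_eq_sum_sq_add (w₁ w₂ w₃ : ℂ) :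
    Pot w₁ w₂ w₃ =
      (1 - (normSq w₁ + normSq w₂ + normSq w₃) / 2) ^ 2 + ((normSq w₁ - normSq w₃) / 2) ^ 2
        + (normSq w₂ * ((normSq w₁ + normSq w₃) / 2)
            - (w₂ ^ 2 * (starRingEnd ℂ) (w₁ * w₃)).re) := by
  rw [Pot]
  ring

/-- The effective potential is nonnegative on all of ℂ³. -/
theorem pot_nonneg (w₁ w₂ w₃ : ℂ) : 0 ≤ Pot w₁ w₂ w₃ := by
  rw [pot_eq_sum_sq_add]
  exact add_nonneg (by positivity) (sub_nonneg.mpr (re_sq_mul_conj_mul_le w₁ w₃ w₂))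
end

section
/- Let K₁, K₂ ∈ ℝ satisfy K₁ ≥ 0, K₁² ≤ 2K₂, and K₂ ≤ K₁². Then the real numbers u = (K₁/4 + √(2K₂ − K₁²)/4)^(1/2) and v = (K₁/4 − √(2K₂ − K₁²)/4)^(1/2) are well defined (the quantities under the square roots are nonnegative) and satisfy 2(u² + v²) = K₁ and 4(u⁴ + v⁴) = K₂. Hence every point (K₁, K₂) in the region {K₁ ≥ 0, K₁² ≤ 2K₂ ≤ 2K₁²} is realized by the gauge-fixed ansatz (u, 0, v) with u, v real. -/
/-- Every point `(K₁, K₂)` of the region `{K₁ ≥ 0, K₁² ≤ 2K₂ ≤ 2K₁²}` is realized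
by the gauge-fixed ansatz `(u, 0, v)` with
`u = (K₁/4 + √(2K₂ - K₁²)/4)^(1/2)` and `v = (K₁/4 - √(2K₂ - K₁²)/4)^(1/2)`:
the quantities under the square roots are nonnegative, and
`2(u² + v²) = K₁`, `4(u⁴ + v⁴) = K₂`. -/
theorem K_region_realized (K₁ K₂ : ℝ)
    (hK₁ : 0 ≤ K₁) (h₁ : K₁ ^ 2 ≤ 2 * K₂) (h₂ : K₂ ≤ K₁ ^ 2) :
    0 ≤ 2 * K₂ - K₁ ^ 2 ∧
    0 ≤ K₁ / 4 + Real.sqrt (2 * K₂ - K₁ ^ 2) / 4 ∧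
    0 ≤ K₁ / 4 - Real.sqrt (2 * K₂ - K₁ ^ 2) / 4 ∧
    (2 * ((Real.sqrt (K₁ / 4 + Real.sqrt (2 * K₂ - K₁ ^ 2) / 4)) ^ 2
          + (Real.sqrt (K₁ / 4 - Real.sqrt (2 * K₂ - K₁ ^ 2) / 4)) ^ 2) = K₁ ∧
      4 * ((Real.sqrt (K₁ / 4 + Real.sqrt (2 * K₂ - K₁ ^ 2) / 4)) ^ 4
          + (Real.sqrt (K₁ / 4 - Real.sqrt (2 * K₂ - K₁ ^ 2) / 4)) ^ 4) = K₂) := by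
  have hD : 0 ≤ 2 * K₂ - K₁ ^ 2 := by linarith
  set s := Real.sqrt (2 * K₂ - K₁ ^ 2) with hs
  have hs0 : 0 ≤ s := Real.sqrt_nonneg _
  have hs2 : s ^ 2 = 2 * K₂ - K₁ ^ 2 := Real.sq_sqrt hD
  have hsK : s ≤ K₁ := by
    nlinarith [Real.sq_sqrt hD, Real.sqrt_nonneg (2 * K₂ - K₁ ^ 2)]
  have ha : 0 ≤ K₁ / 4 + s / 4 := by linarith
  have hb : 0 ≤ K₁ / 4 - s / 4 := by linarith
  have ha2 : Real.sqrt (K₁ / 4 + s / 4) ^ 2 = K₁ / 4 + s / 4 := Real.sq_sqrt ha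
  have hb2 : Real.sqrt (K₁ / 4 - s / 4) ^ 2 = K₁ / 4 - s / 4 := Real.sq_sqrt hb
  have ha4 : Real.sqrt (K₁ / 4 + s / 4) ^ 4 = (K₁ / 4 + s / 4) ^ 2 := by
    rw [show (4:ℕ) = 2 * 2 by norm_num, pow_mul, ha2]
  have hb4 : Real.sqrt (K₁ / 4 - s / 4) ^ 4 = (K₁ / 4 - s / 4) ^ 2 := by
    rw [show (4:ℕ) = 2 * 2 by norm_num, pow_mul, hb2]
  refine ⟨hD, ha, hb, ?_, ?_⟩
  · rw [ha2, hb2]; ring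
  · rw [ha4, hb4]; nlinarith [hs2]
end

section
/- Suppose u, m : (0,∞) → ℝ are twice differentiable and, with N = 1 − 2m/r, solve the half-strength subsystem r²Nu'' + (2m − (1−u²)²/(2r))u' + u(1−u²) = 0 and m' = (N/2)(u')² + (1−u²)²/(4r²). Define ũ(r) = u(r/√2) and m̃(r) = √2·m(r/√2), and Ñ = 1 − 2m̃/r. Then (ũ, m̃) solves the SU(2) Bartnik–McKinnon system: r²Ñũ'' + (2m̃ − (1−ũ²)²/r)ũ' + ũ(1−ũ²) = 0 and m̃' = Ñ(ũ')² + (1−ũ²)²/(2r²). Hence every solution of the half-strength subsystem is a radially scaled SU(2) Bartnik–McKinnon solution with mass smaller by the factor 1/√2. -/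
open Set

/-!
Rescaling `r ↦ r / c` with `m ↦ c m` is a symmetry of the reduced Einstein–Yang–Mills equations
once the Yang–Mills coupling `κ` is replaced by `c² κ`: every derivative picks up a factor `1 / c`,
and these factors cancel except against the coupling. The half-strength subsystem is the case
`κ = 1 / 2`, the Bartnik–McKinnon system the case `κ = 1`, so `c = √2` maps one to the other.
-/

theorem deriv_comp_div_const {𝕜 E : Type*} [NontriviallyNormedField 𝕜] [NormedAddCommGroup E]
    [NormedSpace 𝕜 E] (f : 𝕜 → E) (c x : 𝕜) :
    deriv (fun y => f (y / c)) x = c⁻¹ • deriv f (x / c) := by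
  simpa only [div_eq_inv_mul] using deriv_comp_mul_left c⁻¹ f x

def YMEquationAt (κ : ℝ) (u m : ℝ → ℝ) (r : ℝ) : Prop :=
  r ^ 2 * (1 - 2 * m r / r) * deriv (deriv u) r
    + (2 * m r - κ * (1 - u r ^ 2) ^ 2 / r) * deriv u r + u r * (1 - u r ^ 2) = 0

def MassEquationAt (κ : ℝ) (u m : ℝ → ℝ) (r : ℝ) : Prop :=
  deriv m r = κ * (1 - 2 * m r / r) * deriv u r ^ 2 + κ / 2 * (1 - u r ^ 2) ^ 2 / r ^ 2

section Rescaling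

variable {κ c r : ℝ} {u m : ℝ → ℝ}

theorem YMEquationAt.rescale (hc : c ≠ 0) (hr : r ≠ 0) (h : YMEquationAt κ u m (r / c)) :
    YMEquationAt (c ^ 2 * κ) (fun r => u (r / c)) (fun r => c * m (r / c)) r := by
  have hu' : deriv (fun r => u (r / c)) = fun r => c⁻¹ * deriv u (r / c) :=
    funext (deriv_comp_div_const u c)
  have hu'' : deriv (deriv fun r => u (r / c)) r = c⁻¹ * (c⁻¹ * deriv (deriv u) (r / c)) := by
    rw [hu', deriv_const_mul_field, deriv_comp_div_const, smul_eq_mul]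
  unfold YMEquationAt at h ⊢
  rw [hu'', hu']
  obtain ⟨s, rfl⟩ : ∃ s, r = c * s := ⟨r / c, by field_simp⟩
  have hs : s ≠ 0 := right_ne_zero_of_mul hr
  rw [mul_div_cancel_left₀ s hc] at h ⊢
  field_simp at h ⊢
  linear_combination h

theorem MassEquationAt.rescale (hc : c ≠ 0) (hr : r ≠ 0) (h : MassEquationAt κ u m (r / c)) :
    MassEquationAt (c ^ 2 * κ) (fun r => u (r / c)) (fun r => c * m (r / c)) r := by
  unfold MassEquationAt at h ⊢
  rw [deriv_const_mul_field, deriv_comp_div_const, deriv_comp_div_const, smul_eq_mul,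
    smul_eq_mul]
  obtain ⟨s, rfl⟩ : ∃ s, r = c * s := ⟨r / c, by field_simp⟩
  have hs : s ≠ 0 := right_ne_zero_of_mul hr
  rw [mul_div_cancel_left₀ s hc] at h ⊢
  field_simp at h ⊢
  linear_combination h

end Rescaling

theorem half_strength_rescales_to_BM_general
    (u m : ℝ → ℝ)
    (h1 : ∀ r ∈ Ioi (0 : ℝ),
      r ^ 2 * (1 - 2 * m r / r) * deriv (deriv u) r
        + (2 * m r - (1 - u r ^ 2) ^ 2 / (2 * r)) * deriv u r
        + u r * (1 - u r ^ 2) = 0)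
    (h2 : ∀ r ∈ Ioi (0 : ℝ),
      deriv m r = (1 - 2 * m r / r) / 2 * (deriv u r) ^ 2
        + (1 - u r ^ 2) ^ 2 / (4 * r ^ 2))
    (ut mt : ℝ → ℝ)
    (hut : ut = fun r => u (r / Real.sqrt 2))
    (hmt : mt = fun r => Real.sqrt 2 * m (r / Real.sqrt 2)) :
    (∀ r ∈ Ioi (0 : ℝ),
      r ^ 2 * (1 - 2 * mt r / r) * deriv (deriv ut) r
        + (2 * mt r - (1 - ut r ^ 2) ^ 2 / r) * deriv ut r
        + ut r * (1 - ut r ^ 2) = 0) ∧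
    (∀ r ∈ Ioi (0 : ℝ),
      deriv mt r = (1 - 2 * mt r / r) * (deriv ut r) ^ 2
        + (1 - ut r ^ 2) ^ 2 / (2 * r ^ 2)) := by
  have hc : 0 < Real.sqrt 2 := by positivity
  have hκ : Real.sqrt 2 ^ 2 * (1 / 2) = 1 := by norm_num
  subst hut hmt
  refine ⟨fun r hr => ?_, fun r hr => ?_⟩
  · have hhalf : YMEquationAt (1 / 2) u m (r / Real.sqrt 2) := by
      unfold YMEquationAt; linear_combination h1 _ (div_pos hr hc)
    have hBM := hκ ▸ hhalf.rescale hc.ne' hr.ne'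
    unfold YMEquationAt at hBM; linear_combination hBM
  · have hhalf : MassEquationAt (1 / 2) u m (r / Real.sqrt 2) := by
      unfold MassEquationAt; linear_combination h2 _ (div_pos hr hc)
    have hBM := hκ ▸ hhalf.rescale hc.ne' hr.ne'
    unfold MassEquationAt at hBM; linear_combination hBM

/-- Every solution of the half-strength subsystem is a radially scaled SU(2)
Bartnik–McKinnon solution: if `(u, m)` solves the half-strength subsystem, then
`ũ(r) = u(r/√2)`, `m̃(r) = √2 m(r/√2)` solves the SU(2) Bartnik–McKinnon
system. -/
theorem half_strength_rescales_to_BM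
    (u m : ℝ → ℝ)
    (hu : ∀ r ∈ Ioi (0 : ℝ), DifferentiableAt ℝ u r)
    (hu' : ∀ r ∈ Ioi (0 : ℝ), DifferentiableAt ℝ (deriv u) r)
    (hm : ∀ r ∈ Ioi (0 : ℝ), DifferentiableAt ℝ m r)
    (hm' : ∀ r ∈ Ioi (0 : ℝ), DifferentiableAt ℝ (deriv m) r)
    (h1 : ∀ r ∈ Ioi (0 : ℝ),
      r ^ 2 * (1 - 2 * m r / r) * deriv (deriv u) r
        + (2 * m r - (1 - u r ^ 2) ^ 2 / (2 * r)) * deriv u r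
        + u r * (1 - u r ^ 2) = 0)
    (h2 : ∀ r ∈ Ioi (0 : ℝ),
      deriv m r = (1 - 2 * m r / r) / 2 * (deriv u r) ^ 2
        + (1 - u r ^ 2) ^ 2 / (4 * r ^ 2))
    (ut mt : ℝ → ℝ)
    (hut : ut = fun r => u (r / Real.sqrt 2))
    (hmt : mt = fun r => Real.sqrt 2 * m (r / Real.sqrt 2)) :
    (∀ r ∈ Ioi (0 : ℝ),
      r ^ 2 * (1 - 2 * mt r / r) * deriv (deriv ut) r
        + (2 * mt r - (1 - ut r ^ 2) ^ 2 / r) * deriv ut r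
        + ut r * (1 - ut r ^ 2) = 0) ∧
    (∀ r ∈ Ioi (0 : ℝ),
      deriv mt r = (1 - 2 * mt r / r) * (deriv ut r) ^ 2
        + (1 - ut r ^ 2) ^ 2 / (2 * r ^ 2)) :=
  half_strength_rescales_to_BM_general u m h1 h2 ut mt hut hmt
end

section
/- Fix a₁, a₂ ∈ ℝ and define the polynomial truncations u₀(r) = 1 + a₁r² + ((2/5)a₁³ + (2/5)a₁a₂² + (3/10)a₁²)r⁴, v₀(r) = 1 + a₂r² + ((2/5)a₂a₁² + (2/5)a₂³ + (3/10)a₂²)r⁴, and m₀(r) = (a₁² + a₂²)r³ + ((4/5)a₁³ + (4/5)a₂³)r⁵, with N₀ = 1 − 2m₀/r and Q₀ = (1−u₀²)² + (1−v₀²)². Then as r → 0⁺ the residuals of the reduced SO(5) EYM system vanish to the stated orders: r²N₀u₀'' + (2m₀ − Q₀/(2r))u₀' + u₀(1−u₀²) = O(r⁶), r²N₀v₀'' + (2m₀ − Q₀/(2r))v₀' + v₀(1−v₀²) = O(r⁶), and m₀' − [(N₀/2)((u₀')² + (v₀')²) + Q₀/(4r²)] = O(r⁶). Thus these truncations are the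 formal power-series solutions of the reduced system near r = 0 through the displayed orders, parametrized by (a₁, a₂). -/
/-!
Write `s = r²`. The truncations are `u = 1 + s·α(s)` and `m = r³·μ(s)`, so
`1 - u² = -s·α·(2 + s·α)` and `Q = s²·P(s)` with `P = α₁²(2 + sα₁)² + α₂²(2 + sα₂)²`.
Substituting, the `u`-residual is `s·E(s)` and the mass residual `s·F(s)` for explicit
polynomials `E`, `F`. Their constant terms cancel identically, and their `s`-coefficients vanish
precisely because of the chosen `r⁴` coefficients of `u₀`, `v₀`. Hence `s² ∣ E, F`, and every
residual is `O(s³) = O(r⁶)`. The `v`-equation is the `u`-equation with `a₁ ↔ a₂`.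
-/

open Set Asymptotics Polynomial Filter Topology

namespace Polynomial

theorem X_sq_dvd_of_eval_zero_of_derivative_eval_zero {R : Type*} [CommRing R] {p : R[X]}
    (h₀ : p.eval 0 = 0) (h₁ : p.derivative.eval 0 = 0) : X ^ 2 ∣ p := by
  rw [X_pow_dvd_iff]
  intro d hd
  interval_cases d
  · rwa [coeff_zero_eq_eval_zero]
  · simpa [← coeff_zero_eq_eval_zero, coeff_derivative] using h₁

section Asymptotics

variable {𝕜 : Type*} [NormedField 𝕜] {p : 𝕜[X]} {n : ℕ}

theorem isBigO_eval_of_X_pow_dvd (h : X ^ n ∣ p) : (fun x => p.eval x) =O[𝓝 0] (· ^ n) := by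
  obtain ⟨q, rfl⟩ := h
  simpa using (isBigO_refl (· ^ n) (𝓝 (0 : 𝕜))).mul ((q.continuous.tendsto 0).isBigO_one 𝕜)

theorem isBigO_pow_mul_eval_pow (h : X ^ n ∣ p) (k : ℕ) {m : ℕ} (hm : m ≠ 0) :
    (fun x => x ^ k * p.eval (x ^ m)) =O[𝓝 0] (· ^ (k + m * n)) := by
  have hx : Tendsto (· ^ m) (𝓝 (0 : 𝕜)) (𝓝 0) := by
    simpa [zero_pow hm] using (continuous_pow m).tendsto (0 : 𝕜)
  simpa [pow_add, pow_mul] using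
    (isBigO_refl (· ^ k) (𝓝 (0 : 𝕜))).mul ((isBigO_eval_of_X_pow_dvd h).comp_tendsto hx)

end Asymptotics

theorem deriv_eval_eq_derivative_eval {𝕜 : Type*} [NontriviallyNormedField 𝕜] (p : 𝕜[X]) :
    deriv (fun x => p.eval x) = fun x => p.derivative.eval x := by
  ext
  exact p.deriv

end Polynomial

namespace ReducedEYM

noncomputable def gaugeResidual (u m Q : ℝ → ℝ) (r : ℝ) : ℝ :=
  r ^ 2 * (1 - 2 * m r / r) * deriv (deriv u) r + (2 * m r - Q r / (2 * r)) * deriv u r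
    + u r * (1 - u r ^ 2)

noncomputable def massResidual (u v m Q : ℝ → ℝ) (r : ℝ) : ℝ :=
  deriv m r - ((1 - 2 * m r / r) / 2 * (deriv u r ^ 2 + deriv v r ^ 2) + Q r / (4 * r ^ 2))

noncomputable def quarticCoeff (a b : ℝ) : ℝ := 2 / 5 * a ^ 3 + 2 / 5 * a * b ^ 2 + 3 / 10 * a ^ 2

noncomputable def truncU (a b : ℝ) : ℝ[X] := 1 + C a * X ^ 2 + C (quarticCoeff a b) * X ^ 4

noncomputable def truncM (a b : ℝ) : ℝ[X] :=
  C (a ^ 2 + b ^ 2) * X ^ 3 + C (4 / 5 * a ^ 3 + 4 / 5 * b ^ 3) * X ^ 5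

theorem eval_truncU (a b r : ℝ) :
    (truncU a b).eval r = 1 + a * r ^ 2 + quarticCoeff a b * r ^ 4 := by
  simp [truncU]

theorem eval_truncM (a b r : ℝ) :
    (truncM a b).eval r = (a ^ 2 + b ^ 2) * r ^ 3 + (4 / 5 * a ^ 3 + 4 / 5 * b ^ 3) * r ^ 5 := by
  simp [truncM]

/- Polynomials in `s = r²`: `u = 1 + s·uTail`, `u' = 2r·uSlope`, `m = r³·mTail`, `Q = s²·qTail`. -/

noncomputable def uTail (a b : ℝ) : ℝ[X] := C a + C (quarticCoeff a b) * X

noncomputable def uSlope (a b : ℝ) : ℝ[X] := C a + C (2 * quarticCoeff a b) * X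

noncomputable def mTail (a b : ℝ) : ℝ[X] :=
  C (a ^ 2 + b ^ 2) + C (4 / 5 * a ^ 3 + 4 / 5 * b ^ 3) * X

noncomputable def qTail (a b : ℝ) : ℝ[X] :=
  (uTail a b * (2 + X * uTail a b)) ^ 2 + (uTail b a * (2 + X * uTail b a)) ^ 2

noncomputable def gaugeQuotient (a b : ℝ) : ℝ[X] :=
  (1 - 2 * X * mTail a b) * (C (2 * a) + C (12 * quarticCoeff a b) * X)
    + X * (4 * mTail a b - qTail a b) * uSlope a b
    - (1 + X * uTail a b) * uTail a b * (2 + X * uTail a b)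

noncomputable def massQuotient (a b : ℝ) : ℝ[X] :=
  C (3 * (a ^ 2 + b ^ 2)) + C (4 * (a ^ 3 + b ^ 3)) * X
    - 2 * (1 - 2 * X * mTail a b) * (uSlope a b ^ 2 + uSlope b a ^ 2) - C (1 / 4) * qTail a b

theorem X_sq_dvd_gaugeQuotient (a b : ℝ) : X ^ 2 ∣ gaugeQuotient a b := by
  apply X_sq_dvd_of_eval_zero_of_derivative_eval_zero
  · simp [gaugeQuotient, mTail, qTail, uTail, uSlope]
    ring
  · simp only [gaugeQuotient, mTail, qTail, uTail, uSlope, derivative_mul, derivative_add,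
      derivative_sub, derivative_C, derivative_X, derivative_sq, derivative_one, derivative_ofNat]
    simp [quarticCoeff]
    ring

theorem X_sq_dvd_massQuotient (a b : ℝ) : X ^ 2 ∣ massQuotient a b := by
  apply X_sq_dvd_of_eval_zero_of_derivative_eval_zero
  · simp [massQuotient, mTail, qTail, uTail, uSlope]
    ring
  · simp only [massQuotient, mTail, qTail, uTail, uSlope, derivative_mul, derivative_add,
      derivative_sub, derivative_C, derivative_X, derivative_sq, derivative_one, derivative_ofNat]
    simp [quarticCoeff]
    ring

theorem gaugeResidual_trunc_eq (a b : ℝ) {r : ℝ} (hr : r ≠ 0) :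
    gaugeResidual (truncU a b).eval (truncM a b).eval
        (fun r => (1 - (truncU a b).eval r ^ 2) ^ 2 + (1 - (truncU b a).eval r ^ 2) ^ 2) r
      = r ^ 2 * (gaugeQuotient a b).eval (r ^ 2) := by
  simp only [gaugeResidual, deriv_eval_eq_derivative_eval, truncU, truncM, derivative_mul,
    derivative_add, derivative_C, derivative_X_pow, derivative_one]
  simp [gaugeQuotient, mTail, qTail, uTail, uSlope]
  field_simp
  ring

theorem massResidual_trunc_eq (a b : ℝ) {r : ℝ} (hr : r ≠ 0) :
    massResidual (truncU a b).eval (truncU b a).eval (truncM a b).eval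
        (fun r => (1 - (truncU a b).eval r ^ 2) ^ 2 + (1 - (truncU b a).eval r ^ 2) ^ 2) r
      = r ^ 2 * (massQuotient a b).eval (r ^ 2) := by
  simp only [massResidual, deriv_eval_eq_derivative_eval, truncU, truncM, derivative_mul,
    derivative_add, derivative_C, derivative_X_pow, derivative_one]
  simp [massQuotient, mTail, qTail, uTail, uSlope]
  field_simp
  ring

section Truncations

variable (a b : ℝ) {u v m Q : ℝ → ℝ} (hu : u = (truncU a b).eval) (hv : v = (truncU b a).eval)
  (hm : m = (truncM a b).eval) (hQ : Q = fun r => (1 - u r ^ 2) ^ 2 + (1 - v r ^ 2) ^ 2)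
include hu hv hm hQ

theorem gaugeResidual_isBigO : gaugeResidual u m Q =O[𝓝[>] 0] (· ^ 6) := by
  subst hu hv hm hQ
  refine ((isBigO_pow_mul_eval_pow (X_sq_dvd_gaugeQuotient a b) 2 two_ne_zero).mono
    nhdsWithin_le_nhds).congr' ?_ EventuallyEq.rfl
  filter_upwards [self_mem_nhdsWithin] with r (hr : 0 < r)
  exact (gaugeResidual_trunc_eq a b hr.ne').symm

theorem massResidual_isBigO : massResidual u v m Q =O[𝓝[>] 0] (· ^ 6) := by
  subst hu hv hm hQ
  refine ((isBigO_pow_mul_eval_pow (X_sq_dvd_massQuotient a b) 2 two_ne_zero).mono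
    nhdsWithin_le_nhds).congr' ?_ EventuallyEq.rfl
  filter_upwards [self_mem_nhdsWithin] with r (hr : 0 < r)
  exact (massResidual_trunc_eq a b hr.ne').symm

end Truncations

end ReducedEYM

open ReducedEYM in
/-- The polynomial truncations of the formal power-series solutions of the
reduced SO(5) EYM system near `r = 0`, parametrized by the shooting parameters
`(a₁, a₂)`, satisfy the reduced equations up to residuals of order `O(r⁶)` as
`r → 0⁺`. -/
theorem formal_series_residuals (a₁ a₂ : ℝ)
    (u₀ v₀ m₀ N₀ Q₀ : ℝ → ℝ)
    (hu₀ : u₀ = fun r =>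
      1 + a₁ * r ^ 2 + (2 / 5 * a₁ ^ 3 + 2 / 5 * a₁ * a₂ ^ 2 + 3 / 10 * a₁ ^ 2) * r ^ 4)
    (hv₀ : v₀ = fun r =>
      1 + a₂ * r ^ 2 + (2 / 5 * a₂ * a₁ ^ 2 + 2 / 5 * a₂ ^ 3 + 3 / 10 * a₂ ^ 2) * r ^ 4)
    (hm₀ : m₀ = fun r =>
      (a₁ ^ 2 + a₂ ^ 2) * r ^ 3 + (4 / 5 * a₁ ^ 3 + 4 / 5 * a₂ ^ 3) * r ^ 5)
    (hN₀ : N₀ = fun r => 1 - 2 * m₀ r / r)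
    (hQ₀ : Q₀ = fun r => (1 - u₀ r ^ 2) ^ 2 + (1 - v₀ r ^ 2) ^ 2) :
    (fun r => r ^ 2 * N₀ r * deriv (deriv u₀) r
        + (2 * m₀ r - Q₀ r / (2 * r)) * deriv u₀ r
        + u₀ r * (1 - u₀ r ^ 2)) =O[nhdsWithin 0 (Ioi 0)] (fun r => r ^ 6) ∧
    (fun r => r ^ 2 * N₀ r * deriv (deriv v₀) r
        + (2 * m₀ r - Q₀ r / (2 * r)) * deriv v₀ r
        + v₀ r * (1 - v₀ r ^ 2)) =O[nhdsWithin 0 (Ioi 0)] (fun r => r ^ 6) ∧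
    (fun r => deriv m₀ r
        - ((N₀ r) / 2 * ((deriv u₀ r) ^ 2 + (deriv v₀ r) ^ 2)
          + Q₀ r / (4 * r ^ 2))) =O[nhdsWithin 0 (Ioi 0)] (fun r => r ^ 6) := by
  have hu : u₀ = (truncU a₁ a₂).eval := by
    subst hu₀; funext r; rw [eval_truncU, quarticCoeff]
  have hv : v₀ = (truncU a₂ a₁).eval := by
    subst hv₀; funext r; rw [eval_truncU, quarticCoeff]; ring
  have hm : m₀ = (truncM a₁ a₂).eval := by
    subst hm₀; funext r; rw [eval_truncM]
  have hm' : m₀ = (truncM a₂ a₁).eval := by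
    subst hm₀; funext r; rw [eval_truncM]; ring
  have hQ' : Q₀ = fun r => (1 - v₀ r ^ 2) ^ 2 + (1 - u₀ r ^ 2) ^ 2 :=
    hQ₀.trans (funext fun _ => add_comm _ _)
  subst hN₀
  exact ⟨gaugeResidual_isBigO a₁ a₂ hu hv hm hQ₀, gaugeResidual_isBigO a₂ a₁ hv hu hm' hQ',
    massResidual_isBigO a₁ a₂ hu hv hm hQ₀⟩
end
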